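/- For positive reals ρ_r, ρ_t, ε_v ∈ (0,1), ε_u ∈ (0,1), and positive definite Hermitian matrices, the SINR γ_r = aᴴ(b·a aᴴ + c·t tᴴ + R)⁻¹a·ρε_vε_u (where a = ĥ_r, t = ĥ_t, b = ρ_rε_v(1−ε_u), c = ρ_tε_v, R ≻ 0) can be rewritten as γ_r = ρ_rε_vε_u·ζ/(1 + ρ_rε_v(1−ε_u)·ζ) where ζ = aᴴR⁻¹a − c·(aᴴR⁻¹t)(tᴴR⁻¹a)/(1 + c·tᴴR⁻¹t). -/

import Mathlib

open Matrix ComplexOrder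


lemma vecMulVec_mulVec' {M : ℕ} (u x : Fin M → ℂ) :
    vecMulVec u (star u) *ᵥ x = (star u ⬝ᵥ x) • u := by
  ext i
  simp [mulVec, vecMulVec_apply, dotProduct, Finset.mul_sum, mul_comm, mul_assoc, mul_left_comm]

lemma outer_posSemidef {M : ℕ} (c : ℝ) (hc : 0 ≤ c) (u : Fin M → ℂ) :
    ((c : ℂ) • vecMulVec u (star u)).PosSemidef := by
  refine Matrix.PosSemidef.of_dotProduct_mulVec_nonneg ?_ ?_
  · unfold Matrix.IsHermitian
    ext i j
    simp [vecMulVec_apply, conjTranspose_apply, mul_comm, Complex.conj_ofReal]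
  · intro x
    rw [smul_mulVec, vecMulVec_mulVec', dotProduct_smul, dotProduct_smul]
    have h1 : star x ⬝ᵥ u = star (star u ⬝ᵥ x) := by
      simp [dotProduct, mul_comm]
    rw [h1]
    set z := star u ⬝ᵥ x
    have : (c : ℂ) • z • star z = ((c * Complex.normSq z : ℝ) : ℂ) := by
      simp only [smul_eq_mul, Complex.star_def, Complex.mul_conj]
      push_cast
      ring
    rw [this, Complex.zero_le_real]
    exact mul_nonneg hc (Complex.normSq_nonneg z)

lemma quad_inv_real {M : ℕ} (S : Matrix (Fin M) (Fin M) ℂ) (hS : S.PosDef) (u : Fin M → ℂ) :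
    ∃ r : ℝ, 0 ≤ r ∧ star u ⬝ᵥ (S⁻¹ *ᵥ u) = (r : ℂ) := by
  have hinv : S⁻¹.PosSemidef := hS.inv.posSemidef
  have hle := hinv.dotProduct_mulVec_nonneg u
  rw [Complex.le_def] at hle
  refine ⟨(star u ⬝ᵥ (S⁻¹ *ᵥ u)).re, by simpa using hle.1, ?_⟩
  apply Complex.ext <;> simp [hle.2.symm]

lemma sm_mulVec {M : ℕ} (c : ℝ) (hc : 0 < c) (S : Matrix (Fin M) (Fin M) ℂ)
    (hS : S.PosDef) (u w : Fin M → ℂ) :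
    ((c : ℂ) • vecMulVec u (star u) + S)⁻¹ *ᵥ w =
      S⁻¹ *ᵥ w - ((c : ℂ) * (star u ⬝ᵥ (S⁻¹ *ᵥ w)) /
        (1 + (c : ℂ) * (star u ⬝ᵥ (S⁻¹ *ᵥ u)))) • (S⁻¹ *ᵥ u) := by
  obtain ⟨r, hr0, hα⟩ := quad_inv_real S hS u
  set α : ℂ := star u ⬝ᵥ (S⁻¹ *ᵥ u) with hαdef
  set β : ℂ := star u ⬝ᵥ (S⁻¹ *ᵥ w) with hβdef
  have hD : (1 + (c : ℂ) * α) ≠ 0 := by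
    rw [hα]
    have : (1 + (c : ℂ) * r) = ((1 + c * r : ℝ) : ℂ) := by push_cast; ring
    rw [this]
    exact_mod_cast (by positivity : (0:ℝ) < 1 + c * r).ne'
  set d : ℂ := (c : ℂ) * β / (1 + (c : ℂ) * α) with hddef
  set A := (c : ℂ) • vecMulVec u (star u) + S with hAdef
  have hA : A.PosDef := Matrix.PosDef.posSemidef_add (outer_posSemidef c hc.le u) hS
  have hSdet : IsUnit S.det := (Matrix.isUnit_iff_isUnit_det S).mp hS.isUnit
  have hAdet : IsUnit A.det := (Matrix.isUnit_iff_isUnit_det A).mp hA.isUnit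
  set y : Fin M → ℂ := S⁻¹ *ᵥ w - d • (S⁻¹ *ᵥ u) with hydef
  have hSy : S *ᵥ y = w - d • u := by
    simp only [hydef, mulVec_sub, mulVec_smul, mulVec_mulVec,
      Matrix.mul_nonsing_inv S hSdet, one_mulVec]
  have huy : star u ⬝ᵥ y = β - d * α := by
    rw [hydef, dotProduct_sub, dotProduct_smul, hβdef, hαdef, smul_eq_mul]
  have hAy : A *ᵥ y = w := by
    rw [hAdef, add_mulVec, smul_mulVec, vecMulVec_mulVec', hSy, huy]
    have hkey : (c : ℂ) * (β - d * α) - d = 0 := by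
      rw [hddef]
      field_simp
      ring
    have : (c:ℂ) • ((β - d * α) • u) = ((c:ℂ) * (β - d*α)) • u := by
      rw [smul_smul]
    rw [this]
    have h2 : ((c:ℂ) * (β - d*α)) = d := by linear_combination hkey
    rw [h2]
    abel
  calc A⁻¹ *ᵥ w = A⁻¹ *ᵥ (A *ᵥ y) := by rw [hAy]
    _ = y := by rw [mulVec_mulVec, Matrix.nonsing_inv_mul A hAdet, one_mulVec]

/-- Theorem 2 of the paper: the MMSE-combiner SINR
`γ_r = ρ_r ε_v ε_u · aᴴ(ρ_r ε_v(1-ε_u) a aᴴ + ρ_t ε_v t tᴴ + R)⁻¹ a`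
equals `ρ_r ε_v ε_u ζ / (1 + ρ_r ε_v (1-ε_u) ζ)` with
`ζ = aᴴR⁻¹a − ρ_t ε_v (aᴴR⁻¹t)(tᴴR⁻¹a)/(1 + ρ_t ε_v tᴴR⁻¹t)`. -/
theorem mmse_sinr_rewrite {M : ℕ} (ρr ρt εv εu : ℝ)
    (hρr : 0 < ρr) (hρt : 0 < ρt) (hεv0 : 0 < εv) (hεv1 : εv < 1)
    (hεu0 : 0 < εu) (hεu1 : εu < 1)
    (R : Matrix (Fin M) (Fin M) ℂ) (hR : R.PosDef) (a t : Fin M → ℂ) :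
    ((ρr * εv * εu : ℝ) : ℂ) *
        (star a ⬝ᵥ ((((ρr * εv * (1 - εu) : ℝ) : ℂ) • vecMulVec a (star a) +
            ((ρt * εv : ℝ) : ℂ) • vecMulVec t (star t) + R)⁻¹ *ᵥ a)) =
      ((ρr * εv * εu : ℝ) : ℂ) *
          (star a ⬝ᵥ (R⁻¹ *ᵥ a) -
            ((ρt * εv : ℝ) : ℂ) * (star a ⬝ᵥ (R⁻¹ *ᵥ t)) * (star t ⬝ᵥ (R⁻¹ *ᵥ a)) /
              (1 + ((ρt * εv : ℝ) : ℂ) * (star t ⬝ᵥ (R⁻¹ *ᵥ t)))) /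
        (1 + ((ρr * εv * (1 - εu) : ℝ) : ℂ) *
          (star a ⬝ᵥ (R⁻¹ *ᵥ a) -
            ((ρt * εv : ℝ) : ℂ) * (star a ⬝ᵥ (R⁻¹ *ᵥ t)) * (star t ⬝ᵥ (R⁻¹ *ᵥ a)) /
              (1 + ((ρt * εv : ℝ) : ℂ) * (star t ⬝ᵥ (R⁻¹ *ᵥ t))))) := by
  have hεu' : 0 < 1 - εu := by linarith
  have hb : 0 < ρr * εv * (1 - εu) := by positivity
  have hc : 0 < ρt * εv := by positivity
  set S := ((ρt * εv : ℝ) : ℂ) • vecMulVec t (star t) + R with hSdef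
  have hSpos : S.PosDef := Matrix.PosDef.posSemidef_add (outer_posSemidef _ hc.le t) hR
  -- notation
  set p : ℂ := star a ⬝ᵥ (R⁻¹ *ᵥ a) with hp
  set q : ℂ := star a ⬝ᵥ (R⁻¹ *ᵥ t) with hq
  set s : ℂ := star t ⬝ᵥ (R⁻¹ *ᵥ a) with hs
  set m : ℂ := star t ⬝ᵥ (R⁻¹ *ᵥ t) with hm
  obtain ⟨rm, hrm0, hrm⟩ := quad_inv_real R hR t
  have hDc : (1 + ((ρt * εv : ℝ) : ℂ) * m) ≠ 0 := by
    rw [hm, hrm]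
    have : (1 + ((ρt * εv : ℝ):ℂ) * rm) = ((1 + ρt * εv * rm : ℝ) : ℂ) := by push_cast; ring
    rw [this]
    exact_mod_cast (by positivity : (0:ℝ) < 1 + ρt * εv * rm).ne'
  have hζ : star a ⬝ᵥ (S⁻¹ *ᵥ a) = p - ((ρt * εv : ℝ) : ℂ) * q * s / (1 + ((ρt * εv : ℝ) : ℂ) * m) := by
    rw [hSdef, sm_mulVec _ hc R hR t a, dotProduct_sub, dotProduct_smul, smul_eq_mul,
      ← hp, ← hq, ← hs, ← hm]
    ring
  obtain ⟨z, hz0, hzeq⟩ := quad_inv_real S hSpos a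
  have hDb : (1 + ((ρr * εv * (1 - εu) : ℝ) : ℂ) *
      (p - ((ρt * εv : ℝ) : ℂ) * q * s / (1 + ((ρt * εv : ℝ) : ℂ) * m))) ≠ 0 := by
    rw [← hζ, hzeq]
    have : (1 + ((ρr * εv * (1-εu) : ℝ):ℂ) * z) = ((1 + ρr * εv * (1-εu) * z : ℝ) : ℂ) := by
      push_cast; ring
    rw [this]
    exact_mod_cast (by positivity : (0:ℝ) < 1 + ρr * εv * (1-εu) * z).ne'
  rw [add_assoc, ← hSdef, sm_mulVec _ hb S hSpos a a, dotProduct_sub, dotProduct_smul,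
    smul_eq_mul, hζ]
  set W : ℂ := p - ((ρt * εv : ℝ) : ℂ) * q * s / (1 + ((ρt * εv : ℝ) : ℂ) * m) with hW
  set B : ℂ := ((ρr * εv * (1 - εu) : ℝ) : ℂ) with hB
  set K : ℂ := ((ρr * εv * εu : ℝ) : ℂ) with hK
  field_simp
  ring_nf
  have hDb' : 1 + W * B ≠ 0 := by intro h; apply hDb; linear_combination h
  field_simp
  ring
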